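/- Let N and M be positive integers, X = max(N, M), Y = min(N, M). Let α_1, …, α_Y be non-negative reals, not all zero; let p_1 be the smallest index j with α_j > 0, and let α_min be the minimum of the non-zero α_j's. Then there exists a constant η > 0 such that for every γ > 0, the Lebesgue integral of exp(−γ Σ_{j=1}^Y α_j μ_j) · ψ(μ_1, …, μ_Y) · exp(−Σ_{j=1}^Y μ_j) over the ordered domain {μ ∈ ℝ^Y : μ_1 > μ_2 > ⋯ > μ_Y > 0} is at most η · (γ α_min)^{−(N − p_1 + 1)(M − p_1 + 1)}. -/

import Mathlib

/-!
On the ordered domain `μ₀ > ⋯ > μ_{Y-1} > 0` each factor `(μ_i - μ_j)²`, `i < j`, is at most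
`μ_i²`, so `ψ(μ) ≤ ∏ μ_i ^ d_i` with `d_i = X - Y + 2 (Y - 1 - i)` (indices counted from `0`).
Since `μ` is decreasing, `Σ_j α_j μ_j ≥ α_min μ_{p₁} ≥ α_min / (Y - p₁) · Σ_{i ≥ p₁} μ_i`. Hence
the integrand is dominated by the product of the Gamma kernels `μ_i ^ d_i e^{-(1 + c_i) μ_i}`,
where `c_i = γ α_min / (Y - p₁)` for `i ≥ p₁` and `c_i = 0` otherwise. Integrating over the whole
orthant gives `∏ d_i! / (1 + c_i) ^ (d_i + 1) ≤ ∏ d_i! · c^{-Σ_{i ≥ p₁} (d_i + 1)}`, and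
`Σ_{i ≥ p₁} (d_i + 1) = (X - p₁)(Y - p₁)`.
-/

open MeasureTheory Real Finset

/-- The polynomial factor `ψ(μ) = ∏ i μ_i^{X−Y} ∏_{i<j} (μ_i − μ_j)²` of the joint pdf of
the ordered eigenvalues of an uncorrelated central Wishart matrix, where
`X = max N M`, `Y = min N M`. -/
noncomputable def psi (N M : ℕ) (μ : Fin (min N M) → ℝ) : ℝ :=
  (∏ i, μ i ^ (max N M - min N M)) * ∏ i, ∏ j ∈ Finset.Ioi i, (μ i - μ j) ^ 2

open scoped Nat

lemma integrableOn_pow_mul_exp_neg_mul_Ioi (e : ℕ) {r : ℝ} (hr : 0 < r) :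
    IntegrableOn (fun t : ℝ => t ^ e * exp (-(r * t))) (Set.Ioi 0) := by
  simpa using integrableOn_rpow_mul_exp_neg_mul_rpow (s := e) (p := 1)
    (neg_one_lt_zero.trans_le e.cast_nonneg) one_pos hr

lemma integral_pow_mul_exp_neg_mul_Ioi (e : ℕ) {r : ℝ} (hr : 0 < r) :
    ∫ t in Set.Ioi (0 : ℝ), t ^ e * exp (-(r * t)) = e ! / r ^ (e + 1) := by
  have h := integral_rpow_mul_exp_neg_mul_Ioi (a := e + 1) (by positivity) hr
  rw [add_sub_cancel_right, Gamma_nat_eq_factorial, ← Nat.cast_succ] at h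
  simp only [rpow_natCast] at h
  rw [h, one_div, inv_pow, inv_mul_eq_div]

noncomputable def gammaKernel (e : ℕ) (r : ℝ) : ℝ → ℝ :=
  (Set.Ioi 0).indicator fun t => t ^ e * exp (-(r * t))

lemma gammaKernel_nonneg (e : ℕ) (r t : ℝ) : 0 ≤ gammaKernel e r t :=
  Set.indicator_nonneg (fun _ ht => mul_nonneg (pow_nonneg (Set.mem_Ioi.1 ht).le _)
    (exp_nonneg _)) t

lemma integrable_gammaKernel (e : ℕ) {r : ℝ} (hr : 0 < r) : Integrable (gammaKernel e r) :=
  (integrableOn_pow_mul_exp_neg_mul_Ioi e hr).integrable_indicator measurableSet_Ioi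

lemma integral_gammaKernel (e : ℕ) {r : ℝ} (hr : 0 < r) :
    ∫ t, gammaKernel e r t = e ! / r ^ (e + 1) := by
  rw [gammaKernel, integral_indicator measurableSet_Ioi, integral_pow_mul_exp_neg_mul_Ioi e hr]

section Product

variable {ι : Type*} [Fintype ι]

lemma integrable_prod_gammaKernel (e : ι → ℕ) {r : ι → ℝ} (hr : ∀ i, 0 < r i) :
    Integrable fun μ : ι → ℝ => ∏ i, gammaKernel (e i) (r i) (μ i) :=
  Integrable.fintype_prod fun i => integrable_gammaKernel (e i) (hr i)

lemma integral_prod_gammaKernel (e : ι → ℕ) {r : ι → ℝ} (hr : ∀ i, 0 < r i) :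
    ∫ μ : ι → ℝ, ∏ i, gammaKernel (e i) (r i) (μ i) = ∏ i, ((e i)! / r i ^ (e i + 1) : ℝ) := by
  refine (integral_fintype_prod_eq_prod (fun i => gammaKernel (e i) (r i))).trans ?_
  exact prod_congr rfl fun i _ => integral_gammaKernel (e i) (hr i)

lemma prod_factorial_div_one_add_ite_pow_le [DecidableEq ι] (e : ι → ℕ) (s : Finset ι) {c : ℝ}
    (hc : 0 < c) :
    ∏ i, ((e i)! / (1 + if i ∈ s then c else 0) ^ (e i + 1) : ℝ) ≤
      (∏ i, ((e i)! : ℝ)) * c⁻¹ ^ ∑ i ∈ s, (e i + 1) := by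
  rw [← prod_pow_eq_pow_sum, ← Fintype.prod_ite_mem s, ← prod_mul_distrib]
  refine prod_le_prod (fun i _ => by positivity) fun i _ => ?_
  split_ifs
  · rw [div_eq_mul_inv, ← inv_pow]
    gcongr
    linarith
  · simp

end Product

lemma setIntegral_le_integral_of_forall_le {X : Type*} [MeasurableSpace X] {ν : Measure X}
    {s : Set X} (hs : MeasurableSet s) {f g : X → ℝ} (hg : Integrable g ν) (hg0 : ∀ x, 0 ≤ g x)
    (hf0 : ∀ x ∈ s, 0 ≤ f x) (hfg : ∀ x ∈ s, f x ≤ g x) :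
    ∫ x in s, f x ∂ν ≤ ∫ x, g x ∂ν :=
  (integral_mono_of_nonneg (ae_restrict_of_forall_mem hs hf0) hg.integrableOn
    (ae_restrict_of_forall_mem hs hfg)).trans
    (setIntegral_le_integral hg (.of_forall hg0))

lemma measurableSet_setOf_strictAnti_and_pos (n : ℕ) :
    MeasurableSet {μ : Fin n → ℝ | StrictAnti μ ∧ ∀ i, 0 < μ i} := by
  simp only [StrictAnti, Set.ofPred_and, Set.ofPred_forall]
  measurability

def psiDegree (N M : ℕ) (i : Fin (min N M)) : ℕ :=
  max N M - min N M + 2 * (min N M - 1 - i)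

lemma prod_Ioi_sub_sq_le {n : ℕ} {μ : Fin n → ℝ} (hμ : Antitone μ) (h0 : ∀ i, 0 ≤ μ i)
    (i : Fin n) : ∏ j ∈ Ioi i, (μ i - μ j) ^ 2 ≤ μ i ^ (2 * (n - 1 - i)) :=
  calc ∏ j ∈ Ioi i, (μ i - μ j) ^ 2 ≤ ∏ j ∈ Ioi i, μ i ^ 2 :=
        prod_le_prod (fun _ _ => sq_nonneg _) fun j hj =>
          pow_le_pow_left₀ (sub_nonneg.2 (hμ (mem_Ioi.1 hj).le)) (sub_le_self _ (h0 j)) 2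
    _ = μ i ^ (2 * (n - 1 - i)) := by rw [prod_const, Fin.card_Ioi, ← pow_mul, mul_comm]

lemma psi_nonneg {N M : ℕ} {μ : Fin (min N M) → ℝ} (h0 : ∀ i, 0 ≤ μ i) : 0 ≤ psi N M μ :=
  mul_nonneg (prod_nonneg fun i _ => pow_nonneg (h0 i) _)
    (prod_nonneg fun _ _ => prod_nonneg fun _ _ => sq_nonneg _)

lemma psi_le_prod_pow_psiDegree {N M : ℕ} {μ : Fin (min N M) → ℝ} (hμ : Antitone μ)
    (h0 : ∀ i, 0 ≤ μ i) : psi N M μ ≤ ∏ i, μ i ^ psiDegree N M i := by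
  simp only [psi, psiDegree, pow_add, prod_mul_distrib]
  exact mul_le_mul_of_nonneg_left
    (prod_le_prod (fun _ _ => prod_nonneg fun _ _ => sq_nonneg _) fun i _ =>
      prod_Ioi_sub_sq_le hμ h0 i)
    (prod_nonneg fun i _ => pow_nonneg (h0 i) _)

lemma sum_range_add_two_mul_add_one (s q : ℕ) :
    ∑ k ∈ range q, (s + 2 * k + 1) = q * (s + q) := by
  induction q with
  | zero => simp
  | succ q ih => rw [sum_range_succ, ih]; ring

lemma sum_Ici_psiDegree_succ (N M : ℕ) (p : Fin (min N M)) :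
    ∑ i ∈ Ici p, (psiDegree N M i + 1) = (N - p) * (M - p) := by
  have h := (sum_map (Ici p) Fin.valEmbedding
    fun n => max N M - min N M + 2 * (min N M - 1 - n) + 1).symm
  rw [Fin.map_valEmbedding_Ici, sum_Ico_eq_sum_range, ← sum_range_reflect] at h
  rw [show ∑ i ∈ Ici p, (psiDegree N M i + 1) = _ from h,
    sum_congr rfl fun k hk => show _ = max N M - min N M + 2 * k + 1 by
      simp only [mem_range] at hk; omega,
    sum_range_add_two_mul_add_one]
  have hp := p.isLt
  generalize (p : ℕ) = q at hp ⊢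
  rcases le_total N M with h | h
  · rw [min_eq_left h, max_eq_right h, show M - N + (N - q) = M - q by omega]
  · rw [min_eq_right h, max_eq_left h, show N - M + (M - q) = N - q by omega, mul_comm]

lemma sum_Ici_le_card_mul_of_antitone {n : ℕ} {μ : Fin n → ℝ} (hμ : Antitone μ) (p : Fin n) :
    ∑ i ∈ Ici p, μ i ≤ (n - p : ℕ) * μ p := by
  simpa [Fin.card_Ici] using sum_le_card_nsmul (Ici p) μ (μ p) fun i hi => hμ (mem_Ici.1 hi)

lemma sum_ite_mem_Ici_mul_le {n : ℕ} {α μ : Fin n → ℝ} (hα : ∀ j, 0 ≤ α j) (hμ : Antitone μ)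
    (h0 : ∀ i, 0 ≤ μ i) {p : Fin n} {c : ℝ} (hc0 : 0 ≤ c) (hc : (n - p : ℕ) * c ≤ α p) :
    ∑ i, (if i ∈ Ici p then c else 0) * μ i ≤ ∑ j, α j * μ j :=
  calc ∑ i, (if i ∈ Ici p then c else 0) * μ i = c * ∑ i ∈ Ici p, μ i := by
        simp only [ite_mul, zero_mul, Fintype.sum_ite_mem, mul_sum]
    _ ≤ c * ((n - p : ℕ) * μ p) :=
        mul_le_mul_of_nonneg_left (sum_Ici_le_card_mul_of_antitone hμ p) hc0
    _ ≤ α p * μ p := by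
        rw [← mul_assoc, mul_comm c]; exact mul_le_mul_of_nonneg_right hc (h0 p)
    _ ≤ ∑ j, α j * μ j := single_le_sum (fun j _ => mul_nonneg (hα j) (h0 j)) (mem_univ p)

lemma exp_mul_psi_mul_exp_le_prod_gammaKernel {N M : ℕ} {α μ : Fin (min N M) → ℝ}
    (hα : ∀ j, 0 ≤ α j) (hμ : StrictAnti μ) (hpos : ∀ i, 0 < μ i) {p : Fin (min N M)}
    {γ c : ℝ} (hγ : 0 ≤ γ) (hc0 : 0 ≤ c) (hc : (min N M - p : ℕ) * c ≤ γ * α p) :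
    exp (-(γ * ∑ j, α j * μ j)) * psi N M μ * exp (-∑ j, μ j) ≤
      ∏ i, gammaKernel (psiDegree N M i) (1 + if i ∈ Ici p then c else 0) (μ i) := by
  have h0 i : 0 ≤ μ i := (hpos i).le
  have hweight := sum_ite_mem_Ici_mul_le (α := fun j => γ * α j)
    (fun j => mul_nonneg hγ (hα j)) hμ.antitone h0 hc0 hc
  simp only [mul_assoc, ← mul_sum] at hweight
  have hkernel : ∏ i, gammaKernel (psiDegree N M i) (1 + if i ∈ Ici p then c else 0) (μ i) =
      exp (-∑ i, (if i ∈ Ici p then c else 0) * μ i) * (∏ i, μ i ^ psiDegree N M i) *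
        exp (-∑ j, μ j) := by
    simp only [gammaKernel, Set.indicator_of_mem (Set.mem_Ioi.2 (hpos _)), prod_mul_distrib,
      ← exp_sum]
    rw [mul_comm, mul_right_comm, ← exp_add, ← sum_neg_distrib, ← sum_neg_distrib,
      ← sum_add_distrib]
    congr 2
    exact sum_congr rfl fun i _ => by ring
  rw [hkernel]
  have := psi_nonneg (N := N) (M := M) h0
  gcongr
  exact psi_le_prod_pow_psiDegree hμ.antitone h0

theorem pep_diversity_bound_general (N M : ℕ)
    (α : Fin (min N M) → ℝ) (hα : ∀ j, 0 ≤ α j)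
    (p1 : Fin (min N M)) (hp1 : 0 < α p1)
    (αmin : ℝ) (hminle : ∀ j, α j ≠ 0 → αmin ≤ α j)
    (hminmem : ∃ j, α j ≠ 0 ∧ α j = αmin) :
    ∃ η : ℝ, 0 < η ∧ ∀ γ : ℝ, 0 < γ →
      (∫ μ in {μ : Fin (min N M) → ℝ | StrictAnti μ ∧ ∀ i, 0 < μ i},
          Real.exp (-(γ * ∑ j, α j * μ j)) * psi N M μ * Real.exp (-∑ j, μ j)) ≤
        η * (γ * αmin) ^ (-(((N - (p1 : ℕ)) * (M - (p1 : ℕ)) : ℕ) : ℤ)) := by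
  obtain ⟨j, hj, rfl⟩ := hminmem
  have hαmin : 0 < α j := (hα j).lt_of_ne' hj
  set d := psiDegree N M
  set Q : ℕ := min N M - p1
  have hQ : (0 : ℝ) < Q := Nat.cast_pos.2 (Nat.sub_pos_of_lt p1.isLt)
  refine ⟨(∏ i, ((d i)! : ℝ)) * Q ^ ((N - p1) * (M - p1)), by positivity, fun γ hγ => ?_⟩
  set c := γ * α j / Q
  have hc : 0 < c := by positivity
  have hQc : Q * c ≤ γ * α p1 := by
    rw [mul_div_cancel₀ _ hQ.ne']
    exact mul_le_mul_of_nonneg_left (hminle p1 hp1.ne') hγ.le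
  have hr i : 0 < 1 + if i ∈ Ici p1 then c else 0 := by split_ifs <;> positivity
  calc _ ≤ ∫ μ, ∏ i, gammaKernel (d i) (1 + if i ∈ Ici p1 then c else 0) (μ i) :=
        setIntegral_le_integral_of_forall_le (measurableSet_setOf_strictAnti_and_pos _)
          (integrable_prod_gammaKernel d hr)
          (fun μ => prod_nonneg fun i _ => gammaKernel_nonneg _ _ _)
          (fun μ hμ => by have := psi_nonneg (N := N) (M := M) fun i => (hμ.2 i).le; positivity)
          fun μ hμ => exp_mul_psi_mul_exp_le_prod_gammaKernel hα hμ.1 hμ.2 hγ.le hc.le hQc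
    _ = ∏ i, ((d i)! / (1 + if i ∈ Ici p1 then c else 0) ^ (d i + 1) : ℝ) :=
        integral_prod_gammaKernel d hr
    _ ≤ (∏ i, ((d i)! : ℝ)) * c⁻¹ ^ ((N - p1) * (M - p1)) := by
        rw [← sum_Ici_psiDegree_succ]
        exact prod_factorial_div_one_add_ite_pow_le d _ hc
    _ = _ := by
        rw [zpow_neg, zpow_natCast, mul_assoc, ← div_eq_mul_inv, ← div_pow, ← inv_div]

/-- with non-negative weights `α`, not all zero, `p1` the smallest index
with `α p1 > 0` and `αmin` the minimum of the non-zero weights, there is `η > 0` such that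
for all `γ > 0` the integral of `exp(−γ Σ_j α_j μ_j) ψ(μ) e^{−Σ_j μ_j}` over the ordered
domain is at most `η (γ αmin)^{−(N − p₁ + 1)(M − p₁ + 1)}` (with 0-based `p1`, the
exponent is `(N − p1)(M − p1)`). -/
theorem pep_diversity_bound (N M : ℕ) (hN : 0 < N) (hM : 0 < M)
    (α : Fin (min N M) → ℝ) (hα : ∀ j, 0 ≤ α j)
    (p1 : Fin (min N M)) (hp1 : 0 < α p1) (hp1min : ∀ j, 0 < α j → p1 ≤ j)
    (αmin : ℝ) (hminle : ∀ j, α j ≠ 0 → αmin ≤ α j)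
    (hminmem : ∃ j, α j ≠ 0 ∧ α j = αmin) :
    ∃ η : ℝ, 0 < η ∧ ∀ γ : ℝ, 0 < γ →
      (∫ μ in {μ : Fin (min N M) → ℝ | StrictAnti μ ∧ ∀ i, 0 < μ i},
          Real.exp (-(γ * ∑ j, α j * μ j)) * psi N M μ * Real.exp (-∑ j, μ j)) ≤
        η * (γ * αmin) ^ (-(((N - (p1 : ℕ)) * (M - (p1 : ℕ)) : ℕ) : ℤ)) :=
  pep_diversity_bound_general N M α hα p1 hp1 αmin hminle hminmem
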